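/- arXiv:2512.04961 — 5 statements merged into one kernel-verified Lean document; each statement's English description precedes it below -/
import Mathlib

section
/- Let β : ℝ → ℝ satisfy hypothesis (H_β) and let m > 0. The function g(v) = ψ'(ψ⁻¹(v)) − 1, considered on [0,∞), satisfies: g(0) = 0; g is differentiable with g'(v) = m β(ψ⁻¹(v)) for every v ≥ 0; g(v) = m ∫_0^v β(ψ⁻¹(t)) dt for every v ≥ 0; and g is nonnegative, nondecreasing and convex on [0,∞). -/
open MeasureTheory Filter Set

/-- The integro-exponential change of variables `ψ(u) = ∫₀ᵘ exp(m ∫₀ˢ β(t) dt) ds`. -/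
noncomputable def psi (β : ℝ → ℝ) (m : ℝ) (u : ℝ) : ℝ :=
  ∫ s in (0:ℝ)..u, Real.exp (m * ∫ t in (0:ℝ)..s, β t)

/-- Its derivative `ψ'(u) = exp(m ∫₀ᵘ β(t) dt)`. -/
noncomputable def psi' (β : ℝ → ℝ) (m : ℝ) (u : ℝ) : ℝ :=
  Real.exp (m * ∫ t in (0:ℝ)..u, β t)

/-- The inverse function `ψ⁻¹` of `ψ`. -/
noncomputable def psiInv (β : ℝ → ℝ) (m : ℝ) : ℝ → ℝ :=
  Function.invFun (psi β m)

/-- The function `g(v) = ψ'(ψ⁻¹(v)) − 1`. -/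
noncomputable def gFun (β : ℝ → ℝ) (m : ℝ) (v : ℝ) : ℝ :=
  psi' β m (psiInv β m v) - 1

section aux
variable {β : ℝ → ℝ} {m : ℝ}

lemma hF_deriv (hc : Continuous β) (u : ℝ) :
    HasDerivAt (fun u => ∫ t in (0:ℝ)..u, β t) (β u) u :=
  intervalIntegral.integral_hasDerivAt_right (hc.intervalIntegrable _ _)
    (hc.stronglyMeasurableAtFilter _ _) hc.continuousAt

lemma hpsi'_deriv (hc : Continuous β) (u : ℝ) :
    HasDerivAt (psi' β m) (psi' β m u * (m * β u)) u :=
  ((hF_deriv hc u).const_mul m).exp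

lemma hpsi'_cont (hc : Continuous β) : Continuous (psi' β m) :=
  Real.continuous_exp.comp
    (continuous_const.mul (intervalIntegral.continuous_primitive
      (fun _ _ => hc.intervalIntegrable _ _) 0))

lemma hpsi_deriv (hc : Continuous β) (u : ℝ) :
    HasDerivAt (psi β m) (psi' β m u) u :=
  intervalIntegral.integral_hasDerivAt_right ((hpsi'_cont hc).intervalIntegrable _ _)
    ((hpsi'_cont hc).stronglyMeasurableAtFilter _ _) (hpsi'_cont hc).continuousAt

end aux
section aux2
variable {β : ℝ → ℝ} {m : ℝ}

lemma hbeta0 (hodd : ∀ s, β (-s) = -β s) : β 0 = 0 := by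
  have := hodd 0; rw [neg_zero] at this; linarith

lemma hF_nonneg (hc : Continuous β) (hodd : ∀ s, β (-s) = -β s) (hmono : Monotone β) (u : ℝ) :
    0 ≤ ∫ t in (0:ℝ)..u, β t := by
  rcases le_total 0 u with h | h
  · exact intervalIntegral.integral_nonneg h
      (fun t ht => (hbeta0 hodd) ▸ hmono ht.1)
  · rw [intervalIntegral.integral_symm]
    have : ∫ t in u..(0:ℝ), β t ≤ 0 := by
      have := intervalIntegral.integral_nonneg (f := fun t => -β t) (μ := volume) h
        (fun t ht => by simpa using (hbeta0 hodd) ▸ hmono ht.2)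
      simpa [intervalIntegral.integral_neg] using this
    linarith

lemma hpsi'_ge_one (hm : 0 < m) (hc : Continuous β) (hodd : ∀ s, β (-s) = -β s)
    (hmono : Monotone β) (u : ℝ) : 1 ≤ psi' β m u :=
  Real.one_le_exp (mul_nonneg hm.le (hF_nonneg hc hodd hmono u))

lemma hpsi_ge (hm : 0 < m) (hc : Continuous β) (hodd : ∀ s, β (-s) = -β s)
    (hmono : Monotone β) {u : ℝ} (hu : 0 ≤ u) : u ≤ psi β m u := by
  have h1 : (∫ _s in (0:ℝ)..u, (1:ℝ)) ≤ psi β m u := by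
    apply intervalIntegral.integral_mono_on hu (intervalIntegrable_const)
      ((hpsi'_cont hc).intervalIntegrable _ _)
    exact fun x _ => hpsi'_ge_one hm hc hodd hmono x
  simpa using h1

lemma hpsi_le (hm : 0 < m) (hc : Continuous β) (hodd : ∀ s, β (-s) = -β s)
    (hmono : Monotone β) {u : ℝ} (hu : u ≤ 0) : psi β m u ≤ u := by
  have h1 : (∫ _s in u..(0:ℝ), (1:ℝ)) ≤ ∫ s in u..(0:ℝ), psi' β m s := by
    apply intervalIntegral.integral_mono_on hu (intervalIntegrable_const)
      ((hpsi'_cont hc).intervalIntegrable _ _)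
    exact fun x _ => hpsi'_ge_one hm hc hodd hmono x
  have h2 : psi β m u = -∫ s in u..(0:ℝ), psi' β m s := by
    rw [psi, intervalIntegral.integral_symm]; rfl
  simp only [intervalIntegral.integral_const, smul_eq_mul, mul_one] at h1
  rw [h2]; linarith

lemma hpsi_sm (hc : Continuous β) : StrictMono (psi β m) := by
  have hd : Differentiable ℝ (psi β m) := fun u => (hpsi_deriv hc u).differentiableAt
  apply strictMono_of_deriv_pos
  intro x
  rw [(hpsi_deriv hc x).deriv]
  exact Real.exp_pos _

lemma hpsi_surj (hm : 0 < m) (hc : Continuous β) (hodd : ∀ s, β (-s) = -β s)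
    (hmono : Monotone β) : Function.Surjective (psi β m) := by
  have hd : Differentiable ℝ (psi β m) := fun u => (hpsi_deriv hc u).differentiableAt
  refine hd.continuous.surjective ?_ ?_
  · exact tendsto_atTop_mono' _ (eventually_atTop.2 ⟨0, fun u hu => hpsi_ge hm hc hodd hmono hu⟩)
      tendsto_id
  · exact tendsto_atBot_mono' _ (eventually_atBot.2 ⟨0, fun u hu => hpsi_le hm hc hodd hmono hu⟩)
      tendsto_id

end aux2
section aux3
variable {β : ℝ → ℝ} {m : ℝ}

lemma hri (hm : 0 < m) (hc : Continuous β) (hodd : ∀ s, β (-s) = -β s)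
    (hmono : Monotone β) (v : ℝ) : psi β m (psiInv β m v) = v :=
  Function.invFun_eq (hpsi_surj hm hc hodd hmono v)

lemma hli (hc : Continuous β) (u : ℝ) : psiInv β m (psi β m u) = u :=
  Function.leftInverse_invFun (hpsi_sm hc).injective u

lemma hpsiInv_eq (hm : 0 < m) (hc : Continuous β) (hodd : ∀ s, β (-s) = -β s)
    (hmono : Monotone β) :
    psiInv β m = ⇑(StrictMono.orderIsoOfSurjective (psi β m) (hpsi_sm hc)
      (hpsi_surj hm hc hodd hmono)).symm := by
  funext v
  apply (hpsi_sm hc).injective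
  rw [hri hm hc hodd hmono]
  have := (StrictMono.orderIsoOfSurjective (psi β m) (hpsi_sm hc)
      (hpsi_surj hm hc hodd hmono)).apply_symm_apply v
  rw [StrictMono.coe_orderIsoOfSurjective] at this
  exact this.symm

lemma hpsiInv_cont (hm : 0 < m) (hc : Continuous β) (hodd : ∀ s, β (-s) = -β s)
    (hmono : Monotone β) : Continuous (psiInv β m) := by
  rw [hpsiInv_eq hm hc hodd hmono]; exact OrderIso.continuous _

lemma hpsiInv_mono (hm : 0 < m) (hc : Continuous β) (hodd : ∀ s, β (-s) = -β s)
    (hmono : Monotone β) : Monotone (psiInv β m) := by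
  rw [hpsiInv_eq hm hc hodd hmono]; exact OrderIso.monotone _

lemma hpsi_zero : psi β m 0 = 0 := by simp [psi]

lemma hpsiInv_zero (hc : Continuous β) : psiInv β m 0 = 0 := by
  have := hli (β := β) (m := m) hc 0
  rwa [hpsi_zero] at this

lemma hg_deriv (hm : 0 < m) (hc : Continuous β) (hodd : ∀ s, β (-s) = -β s)
    (hmono : Monotone β) (v : ℝ) :
    HasDerivAt (gFun β m) (m * β (psiInv β m v)) v := by
  set x := psiInv β m v with hx
  have hinv : HasDerivAt (psiInv β m) (psi' β m x)⁻¹ v := by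
    apply HasDerivAt.of_local_left_inverse
      ((hpsiInv_cont hm hc hodd hmono).continuousAt)
      (hpsi_deriv hc x) (Real.exp_pos _).ne'
      (Eventually.of_forall (hri hm hc hodd hmono))
  have h2 := ((hpsi'_deriv (m := m) hc x).comp v hinv).sub_const 1
  have h3 : psi' β m x * (m * β x) * (psi' β m x)⁻¹ = m * β x := by
    rw [mul_comm, ← mul_assoc, inv_mul_cancel₀ (a := psi' β m x) (Real.exp_pos _).ne', one_mul]
  rw [h3] at h2
  exact h2

end aux3


theorem stmt1 (β : ℝ → ℝ) (m : ℝ) (hm : 0 < m)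
    (hodd : ∀ s, β (-s) = -β s)
    (hlip : LocallyLipschitz β)
    (hmono : Monotone β)
    (hsign : ∀ s, 0 ≤ β s * s)
    (htop : Tendsto β atTop atTop) :
    gFun β m 0 = 0 ∧
    (∀ v, 0 ≤ v → HasDerivAt (gFun β m) (m * β (psiInv β m v)) v) ∧
    (∀ v, 0 ≤ v → gFun β m v = m * ∫ t in (0:ℝ)..v, β (psiInv β m t)) ∧
    (∀ v, 0 ≤ v → 0 ≤ gFun β m v) ∧
    MonotoneOn (gFun β m) (Ici 0) ∧
    ConvexOn ℝ (Ici 0) (gFun β m) := by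
  have hc : Continuous β := hlip.continuous
  have h0 : gFun β m 0 = 0 := by
    rw [gFun, hpsiInv_zero hc, psi']
    simp
  have hinv_nonneg : ∀ v : ℝ, 0 ≤ v → 0 ≤ psiInv β m v := by
    intro v hv
    have := hpsiInv_mono hm hc hodd hmono hv
    rwa [hpsiInv_zero hc] at this
  have hgnn : ∀ v, 0 ≤ v → 0 ≤ gFun β m v := by
    intro v hv
    have := hpsi'_ge_one hm hc hodd hmono (psiInv β m v)
    rw [gFun]; linarith
  have hderiv : ∀ v : ℝ, HasDerivAt (gFun β m) (m * β (psiInv β m v)) v :=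
    hg_deriv hm hc hodd hmono
  have hderiv_eq : deriv (gFun β m) = fun v => m * β (psiInv β m v) :=
    funext fun v => (hderiv v).deriv
  have hgd : Differentiable ℝ (gFun β m) := fun v => (hderiv v).differentiableAt
  have hbnn : ∀ s : ℝ, 0 ≤ s → 0 ≤ β s := by
    intro s hs
    have := hmono hs
    rwa [hbeta0 hodd] at this
  refine ⟨h0, fun v _ => hderiv v, ?_, hgnn, ?_, ?_⟩
  · intro v hv
    have := intervalIntegral.integral_eq_sub_of_hasDerivAt
      (f := gFun β m) (f' := fun t => m * β (psiInv β m t)) (a := 0) (b := v)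
      (fun t _ => hderiv t)
      (((continuous_const.mul (hc.comp (hpsiInv_cont hm hc hodd hmono)))).intervalIntegrable _ _)
    rw [h0, sub_zero] at this
    rw [← this, intervalIntegral.integral_const_mul]
  · apply monotoneOn_of_deriv_nonneg (convex_Ici 0) hgd.continuous.continuousOn
      (hgd.differentiableOn)
    intro x hx
    rw [interior_Ici] at hx
    rw [hderiv_eq]
    exact mul_nonneg hm.le (hbnn _ (hinv_nonneg x (le_of_lt hx)))
  · apply MonotoneOn.convexOn_of_deriv (convex_Ici 0) hgd.continuous.continuousOn
      (hgd.differentiableOn)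
    intro x hx y hy hxy
    rw [hderiv_eq]
    exact mul_le_mul_of_nonneg_left (hmono (hpsiInv_mono hm hc hodd hmono hxy)) hm.le
end

section
/- Let β : ℝ → ℝ satisfy hypothesis (H_β), let m > 0 and 0 < λ ≤ Λ. Let Ω ⊆ ℝⁿ be open, u : Ω → ℝ twice continuously differentiable, x ∈ Ω with u(x) ≥ 0, and set v = ψ ∘ u. Then 𝓜⁺(D²u(x)) + m λ β(u(x)) ‖∇u(x)‖² ≤ 𝓜⁺(D²v(x)) / ψ'(u(x)) ≤ 𝓜⁺(D²u(x)) + m Λ β(u(x)) ‖∇u(x)‖², and the same two inequalities hold with 𝓜⁻ in place of 𝓜⁺. -/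
/-!
With `v = ψ ∘ u`, the chain rule gives `D²v = ψ'(u) (D²u + m β(u) ∇u ⊗ ∇u)`. The Pucci operators
are positively homogeneous, so dividing by `ψ'(u) > 0` leaves `𝓜(D²u + m β(u) ∇u ⊗ ∇u)`. For every
admissible `A`, `tr (A (∇u ⊗ ∇u)) = ⟨A ∇u, ∇u⟩ ∈ [λ ‖∇u‖², Λ ‖∇u‖²]`, and `m β(u) ≥ 0` because
`u ≥ 0`, so the rank-one term shifts each `tr (A ·)` by an amount in
`[m λ β(u) ‖∇u‖², m Λ β(u) ‖∇u‖²]`; taking the supremum or infimum over `A` keeps these bounds.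
-/

open MeasureTheory Filter Set

/-- The admissible set for the Pucci extremal operators: real symmetric matrices `A`
with `λI ≤ A ≤ ΛI` in the Loewner (positive-semidefinite) order. -/
def pucciSet (n : ℕ) (lam Lam : ℝ) : Set (Matrix (Fin n) (Fin n) ℝ) :=
  {A | (A - lam • (1 : Matrix (Fin n) (Fin n) ℝ)).PosSemidef ∧
       (Lam • (1 : Matrix (Fin n) (Fin n) ℝ) - A).PosSemidef}

/-- Pucci maximal operator `𝓜⁺(X) = sup { tr(A X) : λI ≤ A ≤ ΛI }`. -/
noncomputable def pucciPlus (n : ℕ) (lam Lam : ℝ) (X : Matrix (Fin n) (Fin n) ℝ) : ℝ :=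
  sSup ((fun A => Matrix.trace (A * X)) '' pucciSet n lam Lam)

/-- Pucci minimal operator `𝓜⁻(X) = inf { tr(A X) : λI ≤ A ≤ ΛI }`. -/
noncomputable def pucciMinus (n : ℕ) (lam Lam : ℝ) (X : Matrix (Fin n) (Fin n) ℝ) : ℝ :=
  sInf ((fun A => Matrix.trace (A * X)) '' pucciSet n lam Lam)

/-- The Hessian matrix `D²u(x)` of a real-valued function on Euclidean space. -/
noncomputable def hess (n : ℕ) (u : EuclideanSpace ℝ (Fin n) → ℝ)
    (x : EuclideanSpace ℝ (Fin n)) : Matrix (Fin n) (Fin n) ℝ :=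
  Matrix.of fun i j =>
    fderiv ℝ (fderiv ℝ u) x (EuclideanSpace.single i 1) (EuclideanSpace.single j 1)

open Matrix

section PsiCalculus

variable {β : ℝ → ℝ}

theorem hasDerivAt_psi' (hβ : Continuous β) (m y : ℝ) :
    HasDerivAt (psi' β m) (m * β y * psi' β m y) y := by
  have h := ((hβ.integral_hasStrictDerivAt 0 y).hasDerivAt.const_mul m).exp
  rwa [mul_comm] at h

theorem hasDerivAt_psi (hβ : Continuous β) (m y : ℝ) : HasDerivAt (psi β m) (psi' β m y) y :=
  have hcont : Continuous (psi' β m) :=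
    continuous_iff_continuousAt.2 fun z => (hasDerivAt_psi' hβ m z).continuousAt
  (hcont.integral_hasStrictDerivAt 0 y).hasDerivAt

end PsiCalculus

section Hessian

variable {n : ℕ} {u : EuclideanSpace ℝ (Fin n) → ℝ} {x : EuclideanSpace ℝ (Fin n)}

theorem fderiv_single_eq_gradient (i : Fin n) :
    fderiv ℝ u x (EuclideanSpace.single i 1) = (gradient u x).ofLp i := by
  rw [gradient, ← InnerProductSpace.toDual_symm_apply, EuclideanSpace.inner_single_right]
  simp

theorem hess_comp {φ φ' : ℝ → ℝ} {φ'' : ℝ} (hφ : ∀ t, HasDerivAt φ (φ' t) t)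
    (hφ' : HasDerivAt φ' φ'' (u x)) (hu : ContDiffAt ℝ 2 u x) :
    hess n (fun y => φ (u y)) x =
      φ' (u x) • hess n u x + φ'' • vecMulVec (gradient u x).ofLp (gradient u x).ofLp := by
  have hdiff : ∀ᶠ y in nhds x, DifferentiableAt ℝ u y :=
    (hu.eventually (by simp)).mono fun y hy => hy.differentiableAt two_ne_zero
  have hfderiv : fderiv ℝ (fun y => φ (u y)) =ᶠ[nhds x] fun y => φ' (u y) • fderiv ℝ u y :=
    hdiff.mono fun y hy => ((hφ (u y)).comp_hasFDerivAt y hy.hasFDerivAt).fderiv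
  have hφ'u : HasFDerivAt (fun y => φ' (u y)) (φ'' • fderiv ℝ u x) x :=
    hφ'.comp_hasFDerivAt x hdiff.self_of_nhds.hasFDerivAt
  have hDu : HasFDerivAt (fderiv ℝ u) (fderiv ℝ (fderiv ℝ u) x) x :=
    ((hu.fderiv_right (by norm_num)).differentiableAt one_ne_zero).hasFDerivAt
  have hD2 : fderiv ℝ (fun y => φ' (u y) • fderiv ℝ u y) x =
      φ' (u x) • fderiv ℝ (fderiv ℝ u) x + (φ'' • fderiv ℝ u x).smulRight (fderiv ℝ u x) :=
    (hφ'u.smul hDu).fderiv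
  ext i j
  simp only [hess, hfderiv.fderiv_eq, hD2, _root_.add_apply, _root_.smul_apply,
    ContinuousLinearMap.smulRight_apply, smul_eq_mul, of_apply, smul_of, Matrix.add_apply,
    Pi.smul_apply, Matrix.smul_apply, vecMulVec_apply, ← fderiv_single_eq_gradient, add_right_inj]
  ring

end Hessian

theorem Matrix.PosSemidef.abs_apply_le {ι : Type*} [Fintype ι] [DecidableEq ι] {B : Matrix ι ι ℝ}
    (hB : B.PosSemidef) (i j : ι) : |B i j| ≤ (B i i + B j j) / 2 := by
  have hsymm : B j i = B i j := by simpa using congrFun (congrFun hB.1 i) j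
  have hquad : ∀ s : ℝ, 0 ≤ B i i + 2 * s * B i j + s ^ 2 * B j j := fun s => by
    have h := hB.dotProduct_mulVec_nonneg (Pi.single i 1 + Pi.single j s)
    simp only [star_trivial, mulVec_add, mulVec_single, MulOpposite.op_one, one_smul,
      op_smul_eq_smul, dotProduct_add, add_dotProduct, single_dotProduct, col_apply, one_mul,
      hsymm, dotProduct_smul, smul_eq_mul] at h
    linarith
  rw [abs_le]
  constructor <;> nlinarith [hquad 1, hquad (-1)]

section ImageBounds

variable {α γ : Type*} [ConditionallyCompleteLattice γ] [AddCommGroup γ] [IsOrderedAddMonoid γ]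
  {S : Set α} {f g : α → γ} {C : γ}

theorem csSup_image_add_le_csSup_image (hS : S.Nonempty) (hg : BddAbove (g '' S))
    (h : ∀ a ∈ S, f a + C ≤ g a) : sSup (f '' S) + C ≤ sSup (g '' S) :=
  le_sub_iff_add_le.1 <| csSup_le (hS.image f) <| forall_mem_image.2 fun a ha =>
    le_sub_iff_add_le.2 <| (h a ha).trans (le_csSup hg (mem_image_of_mem g ha))

theorem csInf_image_add_le_csInf_image (hS : S.Nonempty) (hf : BddBelow (f '' S))
    (h : ∀ a ∈ S, f a + C ≤ g a) : sInf (f '' S) + C ≤ sInf (g '' S) :=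
  le_csInf (hS.image g) <| forall_mem_image.2 fun a ha =>
    (add_le_add_left (csInf_le hf (mem_image_of_mem f ha)) C).trans (h a ha)

end ImageBounds

section Pucci

variable {n : ℕ} {lam Lam : ℝ}

theorem pucciSet_nonempty (hle : lam ≤ Lam) : (pucciSet n lam Lam).Nonempty := by
  refine ⟨lam • 1, by simpa using PosSemidef.zero, ?_⟩
  rw [← sub_smul, smul_one_eq_diagonal]
  exact PosSemidef.diagonal fun _ => sub_nonneg.2 hle

theorem abs_apply_le_of_mem_pucciSet {A : Matrix (Fin n) (Fin n) ℝ} (hA : A ∈ pucciSet n lam Lam)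
    (i j : Fin n) : |A i j| ≤ Lam - lam + |lam| := by
  set B := A - lam • (1 : Matrix (Fin n) (Fin n) ℝ) with hB_def
  have hdiag : ∀ k, B k k ≤ Lam - lam := fun k => by
    have := hA.2.diag_nonneg (i := k)
    simp only [hB_def, Matrix.sub_apply, Matrix.smul_apply, one_apply_eq, smul_eq_mul] at this ⊢
    linarith
  have hB : |B i j| ≤ Lam - lam :=
    (hA.1.abs_apply_le i j).trans (by linarith [hdiag i, hdiag j])
  have hI : |(lam • (1 : Matrix (Fin n) (Fin n) ℝ)) i j| ≤ |lam| := by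
    by_cases h : i = j <;> simp [one_apply, h]
  calc |A i j| = |B i j + (lam • (1 : Matrix (Fin n) (Fin n) ℝ)) i j| := by simp [hB_def]
    _ ≤ Lam - lam + |lam| := (abs_add_le _ _).trans (add_le_add hB hI)

theorem isBounded_image_trace_mul_pucciSet (X : Matrix (Fin n) (Fin n) ℝ) :
    Bornology.IsBounded ((fun A => trace (A * X)) '' pucciSet n lam Lam) := by
  set K := (Lam - lam + |lam|) * ∑ i, ∑ j, |X j i|
  refine (Metric.isBounded_Icc (-K) K).subset ?_
  rintro _ ⟨A, hA, rfl⟩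
  rw [mem_Icc, ← abs_le]
  calc |trace (A * X)| = |∑ i, ∑ j, A i j * X j i| := by simp [trace, mul_apply]
    _ ≤ ∑ i, ∑ j, |A i j * X j i| :=
      (Finset.abs_sum_le_sum_abs _ _).trans
        (Finset.sum_le_sum fun i _ => Finset.abs_sum_le_sum_abs _ _)
    _ ≤ ∑ i, ∑ j, (Lam - lam + |lam|) * |X j i| := by
      gcongr with i _ j _
      rw [abs_mul]
      exact mul_le_mul_of_nonneg_right (abs_apply_le_of_mem_pucciSet hA i j) (abs_nonneg _)
    _ = K := by simp only [K, Finset.mul_sum]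

theorem dotProduct_mulVec_mem_Icc_of_mem_pucciSet {A : Matrix (Fin n) (Fin n) ℝ}
    (hA : A ∈ pucciSet n lam Lam) (v : Fin n → ℝ) :
    lam * (v ⬝ᵥ v) ≤ v ⬝ᵥ (A *ᵥ v) ∧ v ⬝ᵥ (A *ᵥ v) ≤ Lam * (v ⬝ᵥ v) := by
  have h1 := hA.1.dotProduct_mulVec_nonneg v
  have h2 := hA.2.dotProduct_mulVec_nonneg v
  simp only [star_trivial, sub_mulVec, smul_mulVec, one_mulVec, dotProduct_sub,
    dotProduct_smul, smul_eq_mul] at h1 h2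
  constructor <;> linarith

theorem trace_mul_add_vecMulVec (A X : Matrix (Fin n) (Fin n) ℝ) (b : ℝ) (g : Fin n → ℝ) :
    trace (A * (X + b • vecMulVec g g)) = trace (A * X) + b * (g ⬝ᵥ (A *ᵥ g)) := by
  rw [Matrix.mul_add, trace_add, Matrix.mul_smul, trace_smul, mul_vecMulVec, trace_vecMulVec,
    dotProduct_comm, smul_eq_mul]

theorem pucciPlus_smul {c : ℝ} (hc : 0 ≤ c) (X : Matrix (Fin n) (Fin n) ℝ) :
    pucciPlus n lam Lam (c • X) = c * pucciPlus n lam Lam X := by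
  rw [pucciPlus, pucciPlus, ← smul_eq_mul, ← Real.sSup_smul_of_nonneg hc, ← image_smul,
    image_image]
  simp [trace_smul]

theorem pucciMinus_smul {c : ℝ} (hc : 0 ≤ c) (X : Matrix (Fin n) (Fin n) ℝ) :
    pucciMinus n lam Lam (c • X) = c * pucciMinus n lam Lam X := by
  rw [pucciMinus, pucciMinus, ← smul_eq_mul, ← Real.sInf_smul_of_nonneg hc, ← image_smul,
    image_image]
  simp [trace_smul]

theorem pucciPlus_add_smul_vecMulVec_bounds (hle : lam ≤ Lam) (X : Matrix (Fin n) (Fin n) ℝ)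
    (g : Fin n → ℝ) {b : ℝ} (hb : 0 ≤ b) :
    pucciPlus n lam Lam X + b * lam * (g ⬝ᵥ g) ≤ pucciPlus n lam Lam (X + b • vecMulVec g g) ∧
      pucciPlus n lam Lam (X + b • vecMulVec g g) ≤ pucciPlus n lam Lam X + b * Lam * (g ⬝ᵥ g) := by
  have hS := pucciSet_nonempty (n := n) hle
  have hQ := fun A (hA : A ∈ pucciSet n lam Lam) => dotProduct_mulVec_mem_Icc_of_mem_pucciSet hA g
  constructor
  · refine csSup_image_add_le_csSup_image hS (isBounded_image_trace_mul_pucciSet _).bddAbove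
      fun A hA => ?_
    rw [trace_mul_add_vecMulVec]
    nlinarith [(hQ A hA).1]
  · have : pucciPlus n lam Lam (X + b • vecMulVec g g) + -(b * Lam * (g ⬝ᵥ g)) ≤
        pucciPlus n lam Lam X :=
      csSup_image_add_le_csSup_image hS (isBounded_image_trace_mul_pucciSet _).bddAbove
        fun A hA => by
          rw [trace_mul_add_vecMulVec]
          nlinarith [(hQ A hA).2]
    linarith

theorem pucciMinus_add_smul_vecMulVec_bounds (hle : lam ≤ Lam) (X : Matrix (Fin n) (Fin n) ℝ)
    (g : Fin n → ℝ) {b : ℝ} (hb : 0 ≤ b) :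
    pucciMinus n lam Lam X + b * lam * (g ⬝ᵥ g) ≤ pucciMinus n lam Lam (X + b • vecMulVec g g) ∧
      pucciMinus n lam Lam (X + b • vecMulVec g g) ≤
        pucciMinus n lam Lam X + b * Lam * (g ⬝ᵥ g) := by
  have hS := pucciSet_nonempty (n := n) hle
  have hQ := fun A (hA : A ∈ pucciSet n lam Lam) => dotProduct_mulVec_mem_Icc_of_mem_pucciSet hA g
  constructor
  · refine csInf_image_add_le_csInf_image hS (isBounded_image_trace_mul_pucciSet _).bddBelow
      fun A hA => ?_
    rw [trace_mul_add_vecMulVec]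
    nlinarith [(hQ A hA).1]
  · have : pucciMinus n lam Lam (X + b • vecMulVec g g) + -(b * Lam * (g ⬝ᵥ g)) ≤
        pucciMinus n lam Lam X :=
      csInf_image_add_le_csInf_image hS (isBounded_image_trace_mul_pucciSet _).bddBelow
        fun A hA => by
          rw [trace_mul_add_vecMulVec]
          nlinarith [(hQ A hA).2]
    linarith

end Pucci

theorem stmt7_general (n : ℕ) (β : ℝ → ℝ) (m lam Lam : ℝ) (hm : 0 < m)
    (hle : lam ≤ Lam)
    (hodd : ∀ s, β (-s) = -β s)
    (hlip : LocallyLipschitz β)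
    (hmono : Monotone β)
    (Ω : Set (EuclideanSpace ℝ (Fin n))) (hΩ : IsOpen Ω)
    (u : EuclideanSpace ℝ (Fin n) → ℝ) (hu : ContDiffOn ℝ 2 u Ω)
    (x : EuclideanSpace ℝ (Fin n)) (hx : x ∈ Ω) (hux : 0 ≤ u x) :
    (pucciPlus n lam Lam (hess n u x) + m * lam * β (u x) * ‖gradient u x‖ ^ 2 ≤
        pucciPlus n lam Lam (hess n (fun y => psi β m (u y)) x) / psi' β m (u x) ∧
      pucciPlus n lam Lam (hess n (fun y => psi β m (u y)) x) / psi' β m (u x) ≤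
        pucciPlus n lam Lam (hess n u x) + m * Lam * β (u x) * ‖gradient u x‖ ^ 2) ∧
    (pucciMinus n lam Lam (hess n u x) + m * lam * β (u x) * ‖gradient u x‖ ^ 2 ≤
        pucciMinus n lam Lam (hess n (fun y => psi β m (u y)) x) / psi' β m (u x) ∧
      pucciMinus n lam Lam (hess n (fun y => psi β m (u y)) x) / psi' β m (u x) ≤
        pucciMinus n lam Lam (hess n u x) + m * Lam * β (u x) * ‖gradient u x‖ ^ 2) := by
  have hβ : Continuous β := hlip.continuous
  have hβu : 0 ≤ β (u x) := by
    have hβ0 : β 0 = 0 := by linarith [neg_zero (G := ℝ) ▸ hodd 0]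
    exact hβ0 ▸ hmono hux
  set c := psi' β m (u x)
  have hc : 0 < c := Real.exp_pos _
  set g := (gradient u x).ofLp
  have hhess : hess n (fun y => psi β m (u y)) x =
      c • (hess n u x + (m * β (u x)) • vecMulVec g g) := by
    rw [hess_comp (hasDerivAt_psi hβ m) (hasDerivAt_psi' hβ m (u x))
      (hu.contDiffAt (hΩ.mem_nhds hx))]
    module
  have hgrad : ‖gradient u x‖ ^ 2 = g ⬝ᵥ g := by
    rw [EuclideanSpace.real_norm_sq_eq]
    simp [dotProduct, sq, g]
  rw [hhess, pucciPlus_smul hc.le, pucciMinus_smul hc.le, mul_div_cancel_left₀ _ hc.ne',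
    mul_div_cancel_left₀ _ hc.ne', hgrad]
  have hb : 0 ≤ m * β (u x) := mul_nonneg hm.le hβu
  obtain ⟨hp₁, hp₂⟩ := pucciPlus_add_smul_vecMulVec_bounds hle (hess n u x) g hb
  obtain ⟨hm₁, hm₂⟩ := pucciMinus_add_smul_vecMulVec_bounds hle (hess n u x) g hb
  exact ⟨⟨by linear_combination hp₁, by linear_combination hp₂⟩,
    by linear_combination hm₁, by linear_combination hm₂⟩

theorem stmt7 (n : ℕ) (β : ℝ → ℝ) (m lam Lam : ℝ) (hm : 0 < m)
    (hlam : 0 < lam) (hle : lam ≤ Lam)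
    (hodd : ∀ s, β (-s) = -β s)
    (hlip : LocallyLipschitz β)
    (hmono : Monotone β)
    (hsign : ∀ s, 0 ≤ β s * s)
    (htop : Tendsto β atTop atTop)
    (Ω : Set (EuclideanSpace ℝ (Fin n))) (hΩ : IsOpen Ω)
    (u : EuclideanSpace ℝ (Fin n) → ℝ) (hu : ContDiffOn ℝ 2 u Ω)
    (x : EuclideanSpace ℝ (Fin n)) (hx : x ∈ Ω) (hux : 0 ≤ u x) :
    (pucciPlus n lam Lam (hess n u x) + m * lam * β (u x) * ‖gradient u x‖ ^ 2 ≤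
        pucciPlus n lam Lam (hess n (fun y => psi β m (u y)) x) / psi' β m (u x) ∧
      pucciPlus n lam Lam (hess n (fun y => psi β m (u y)) x) / psi' β m (u x) ≤
        pucciPlus n lam Lam (hess n u x) + m * Lam * β (u x) * ‖gradient u x‖ ^ 2) ∧
    (pucciMinus n lam Lam (hess n u x) + m * lam * β (u x) * ‖gradient u x‖ ^ 2 ≤
        pucciMinus n lam Lam (hess n (fun y => psi β m (u y)) x) / psi' β m (u x) ∧
      pucciMinus n lam Lam (hess n (fun y => psi β m (u y)) x) / psi' β m (u x) ≤
        pucciMinus n lam Lam (hess n u x) + m * Lam * β (u x) * ‖gradient u x‖ ^ 2) :=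
  stmt7_general n β m lam Lam hm hle hodd hlip hmono Ω hΩ u hu x hx hux
end

section
/- Fix an integer k ≥ 1 and m > 0, and let Ψ(u) = ∫_0^u exp(−(m/(k+1)) t^{k+1}) dt and C_β = ∫_0^∞ exp(−(m/(k+1)) t^{k+1}) dt. For s ∈ (0,1) let t_s ≥ 0 be the unique nonnegative real number with Ψ(t_s) = (1−s) C_β. Then t_s^{k+1} / (−ln s) → (k+1)/m as s → 0⁺. -/
open MeasureTheory Filter Set
open scoped Topology

/-- `Ψ(u) = ∫₀ᵘ exp(−(m/(k+1)) t^{k+1}) dt`, the change of variables in the model case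
`β(s) = s^k`. -/
noncomputable def PsiK (k : ℕ) (m : ℝ) (u : ℝ) : ℝ :=
  ∫ t in (0:ℝ)..u, Real.exp (-(m / ((k:ℝ) + 1)) * t ^ (k + 1))

/-- `C_β = ∫₀^∞ exp(−(m/(k+1)) t^{k+1}) dt`. -/
noncomputable def CbetaK (k : ℕ) (m : ℝ) : ℝ :=
  ∫ t in Set.Ioi (0:ℝ), Real.exp (-(m / ((k:ℝ) + 1)) * t ^ (k + 1))

/-! Write `w(t) = exp (-(m / (k + 1)) t ^ (k + 1))` and `T(x) = ∫ₓ^∞ w = C_β - Ψ(x)`, so that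
`T(t_s) = s C_β`. For `x ≥ 1` we have `u ^ k ≥ 1` on `[x, ∞)`, and `m u ^ k w(u) = -w'(u)` gives
`m T(x) ≤ w(x)`; on the other side `T(x) ≥ ∫ₓ^{x+1} w ≥ w(x + 1)`. Hence
`-log T(x) ~ (m / (k + 1)) x ^ (k + 1)` as `x → ∞`. Since `T(t_s) → 0`, the bound `T(x) ≥ w(x + 1)` forces
`t_s → ∞`, and `-log s = -log T(t_s) + log C_β` yields the limit. -/

open Real

noncomputable def weightK (k : ℕ) (m t : ℝ) : ℝ :=
  exp (-(m / ((k:ℝ) + 1)) * t ^ (k + 1))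

noncomputable def tailK (k : ℕ) (m x : ℝ) : ℝ :=
  ∫ t in Ioi x, weightK k m t

section
variable {k : ℕ} {m : ℝ}

lemma weightK_pos (t : ℝ) : 0 < weightK k m t := exp_pos _

lemma continuous_weightK : Continuous (weightK k m) := by
  unfold weightK; fun_prop

lemma weightK_le_weightK (hm : 0 ≤ m) {x y : ℝ} (hx : 0 ≤ x) (hxy : x ≤ y) :
    weightK k m y ≤ weightK k m x := by
  unfold weightK
  rw [exp_le_exp, neg_mul, neg_mul, neg_le_neg_iff]
  gcongr

lemma hasDerivAt_weightK (t : ℝ) :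
    HasDerivAt (weightK k m) (-m * t ^ k * weightK k m t) t := by
  have hpow : HasDerivAt (fun u : ℝ => -(m / ((k:ℝ) + 1)) * u ^ (k + 1))
      (-(m / ((k:ℝ) + 1)) * (((k + 1 : ℕ) : ℝ) * t ^ k)) t := by
    simpa using (hasDerivAt_pow (k + 1) t).const_mul (-(m / ((k:ℝ) + 1)))
  refine ((hasDerivAt_exp _).comp t hpow).congr_deriv ?_
  have hk : (k:ℝ) + 1 ≠ 0 := by positivity
  simp only [weightK]
  push_cast
  field_simp

lemma tendsto_weightK_atTop (hm : 0 < m) : Tendsto (weightK k m) atTop (𝓝 0) := by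
  refine tendsto_exp_atBot.comp ?_
  have h := ((tendsto_pow_atTop (Nat.succ_ne_zero k)).const_mul_atTop
    (show 0 < m / ((k:ℝ) + 1) by positivity))
  simpa only [neg_mul, Function.comp_def] using tendsto_neg_atTop_atBot.comp h

lemma integrableOn_weightK (hm : 0 < m) (x : ℝ) : IntegrableOn (weightK k m) (Ioi x) := by
  have h0 : IntegrableOn (weightK k m) (Ioi 0) := by
    refine (integrableOn_rpow_mul_exp_neg_mul_rpow (s := 0) (p := (k:ℝ) + 1) (by norm_num)
      (by linarith [k.cast_nonneg (α := ℝ)]) (by positivity : 0 < m / ((k:ℝ) + 1))).congr_fun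
      (fun t _ => ?_) measurableSet_Ioi
    simp only [rpow_zero, one_mul, weightK]
    rw [← rpow_natCast t (k + 1)]
    push_cast
    rfl
  refine ((continuous_weightK.integrableOn_Icc (a := x) (b := 0)).union h0).mono_set fun t ht => ?_
  rcases le_or_gt t 0 with h | h
  · exact Or.inl ⟨(mem_Ioi.1 ht).le, h⟩
  · exact Or.inr h

lemma tailK_eq_sub (hm : 0 < m) (x : ℝ) : tailK k m x = CbetaK k m - PsiK k m x := by
  change tailK k m x = tailK k m 0 - ∫ t in (0:ℝ)..x, weightK k m t
  rw [← intervalIntegral.integral_Ioi_sub_Ioi' (integrableOn_weightK hm 0)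
    (integrableOn_weightK hm x)]
  exact (sub_sub_cancel _ _).symm

lemma mul_tailK_le (hm : 0 < m) {x : ℝ} (hx : 1 ≤ x) : m * tailK k m x ≤ weightK k m x := by
  have hderiv : ∀ u ∈ Ici x, HasDerivAt (fun u => -weightK k m u) (m * u ^ k * weightK k m u) u :=
    fun u _ => (hasDerivAt_weightK u).neg.congr_deriv (by ring)
  have hnonneg : ∀ u ∈ Ioi x, 0 ≤ m * u ^ k * weightK k m u := fun u hu => by
    have hu0 : 0 < u := by linarith [mem_Ioi.1 hu]
    have hw := weightK_pos (k := k) (m := m) u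
    positivity
  have hlim : Tendsto (fun u => -weightK k m u) atTop (𝓝 0) := by
    simpa using (tendsto_weightK_atTop (k := k) hm).neg
  calc m * tailK k m x = ∫ u in Ioi x, m * weightK k m u := (integral_const_mul _ _).symm
    _ ≤ ∫ u in Ioi x, m * u ^ k * weightK k m u := by
      refine setIntegral_mono_on ((integrableOn_weightK hm x).const_mul m)
        (integrableOn_Ioi_deriv_of_nonneg' hderiv hnonneg hlim) measurableSet_Ioi fun u hu => ?_
      have hu1 : 1 ≤ u ^ k := one_le_pow₀ (hx.trans (mem_Ioi.1 hu).le)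
      have hw := mul_pos hm (weightK_pos (k := k) (m := m) u)
      nlinarith [mul_le_mul_of_nonneg_left hu1 hw.le]
    _ = weightK k m x := by
      rw [integral_Ioi_of_hasDerivAt_of_nonneg' hderiv hnonneg hlim]
      ring

lemma weightK_add_one_le_tailK (hm : 0 < m) {x : ℝ} (hx : 0 ≤ x) :
    weightK k m (x + 1) ≤ tailK k m x := by
  have hint := integrableOn_weightK (k := k) hm x
  calc weightK k m (x + 1) = weightK k m (x + 1) * volume.real (Ioc x (x + 1)) := by simp
    _ ≤ ∫ t in Ioc x (x + 1), weightK k m t :=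
      setIntegral_ge_of_const_le_real measurableSet_Ioc (by simp)
        (fun t ht => weightK_le_weightK hm.le (hx.trans ht.1.le) ht.2)
        (hint.mono_set Ioc_subset_Ioi_self)
    _ ≤ tailK k m x :=
      setIntegral_mono_set hint (.of_forall fun t => (weightK_pos t).le)
        Ioc_subset_Ioi_self.eventuallyLE

lemma tailK_pos (hm : 0 < m) {x : ℝ} (hx : 0 ≤ x) : 0 < tailK k m x :=
  (weightK_pos _).trans_le (weightK_add_one_le_tailK hm hx)

lemma add_log_le_neg_log_tailK (hm : 0 < m) {x : ℝ} (hx : 1 ≤ x) :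
    m / ((k:ℝ) + 1) * x ^ (k + 1) + log m ≤ -log (tailK k m x) := by
  have hT := tailK_pos (k := k) hm (zero_le_one.trans hx)
  have h := log_le_log (mul_pos hm hT) (mul_tailK_le hm hx)
  rw [log_mul hm.ne' hT.ne', weightK, log_exp] at h
  linarith

lemma neg_log_tailK_le (hm : 0 < m) {x : ℝ} (hx : 0 ≤ x) :
    -log (tailK k m x) ≤ m / ((k:ℝ) + 1) * (x + 1) ^ (k + 1) := by
  have h := log_le_log (weightK_pos _) (weightK_add_one_le_tailK (k := k) hm hx)
  rw [weightK, log_exp] at h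
  linarith

lemma tendsto_neg_log_tailK_div_pow (hm : 0 < m) :
    Tendsto (fun x => -log (tailK k m x) / x ^ (k + 1)) atTop (𝓝 (m / ((k:ℝ) + 1))) := by
  set a := m / ((k:ℝ) + 1)
  have hpow : Tendsto (fun x : ℝ => (x ^ (k + 1))⁻¹) atTop (𝓝 0) :=
    (tendsto_pow_atTop (Nat.succ_ne_zero k)).inv_tendsto_atTop
  have hlower : Tendsto (fun x : ℝ => a + log m * (x ^ (k + 1))⁻¹) atTop (𝓝 a) := by
    simpa using (hpow.const_mul (log m)).const_add a
  have hupper : Tendsto (fun x : ℝ => a * (1 + x⁻¹) ^ (k + 1)) atTop (𝓝 a) := by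
    simpa using (((tendsto_inv_atTop_zero.const_add 1).pow (k + 1)).const_mul a)
  refine tendsto_of_tendsto_of_tendsto_of_le_of_le' hlower hupper ?_ ?_ <;>
    filter_upwards [eventually_ge_atTop 1] with x hx
  · have hxk : 0 < x ^ (k + 1) := by positivity
    rw [le_div_iff₀ hxk, add_mul, mul_assoc, inv_mul_cancel₀ hxk.ne']
    linarith [add_log_le_neg_log_tailK (k := k) hm hx]
  · have hx0 : x ≠ 0 := by positivity
    rw [div_le_iff₀ (by positivity), mul_assoc, ← mul_pow, add_mul, inv_mul_cancel₀ hx0, one_mul]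
    exact neg_log_tailK_le (k := k) hm (zero_le_one.trans hx)

lemma tendsto_atTop_of_tailK_eq_mul (hm : 0 < m) {C : ℝ} (hC : 0 < C) {ts : ℝ → ℝ}
    (hts : ∀ s ∈ Ioo (0:ℝ) 1, 0 ≤ ts s ∧ tailK k m (ts s) = s * C) :
    Tendsto ts (𝓝[>] 0) atTop := by
  refine tendsto_atTop.2 fun b => ?_
  set b' := max b 0
  have hε : 0 < weightK k m (b' + 1) / C := div_pos (weightK_pos _) hC
  filter_upwards [Ioo_mem_nhdsGT (lt_min one_pos hε)] with s hs
  have hs1 : s ∈ Ioo (0:ℝ) 1 := ⟨hs.1, hs.2.trans_le (min_le_left _ _)⟩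
  obtain ⟨hts0, htail⟩ := hts s hs1
  by_contra! hlt
  have hsC : s * C < weightK k m (b' + 1) := (lt_div_iff₀ hC).1 (hs.2.trans_le (min_le_right _ _))
  have hmono : weightK k m (b' + 1) ≤ weightK k m (ts s + 1) :=
    weightK_le_weightK hm.le (by linarith) (by linarith [le_max_left b 0])
  linarith [weightK_add_one_le_tailK (k := k) hm hts0]

end

theorem stmt13_general (k : ℕ) (m : ℝ) (hm : 0 < m)
    (ts : ℝ → ℝ)
    (hts : ∀ s ∈ Set.Ioo (0:ℝ) 1, 0 ≤ ts s ∧ PsiK k m (ts s) = (1 - s) * CbetaK k m) :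
    Tendsto (fun s : ℝ => (ts s) ^ (k + 1) / (-Real.log s))
      (𝓝[>] (0:ℝ)) (𝓝 (((k:ℝ) + 1) / m)) := by
  set C := CbetaK k m
  have hC : 0 < C := by
    simpa [tailK_eq_sub hm 0, PsiK] using tailK_pos (k := k) hm le_rfl
  have htail : ∀ s ∈ Ioo (0:ℝ) 1, 0 ≤ ts s ∧ tailK k m (ts s) = s * C := fun s hs =>
    ⟨(hts s hs).1, by rw [tailK_eq_sub hm, (hts s hs).2]; ring⟩
  have htop := tendsto_atTop_of_tailK_eq_mul hm hC htail
  have hratio : Tendsto (fun s => -log s / ts s ^ (k + 1)) (𝓝[>] 0) (𝓝 (m / ((k:ℝ) + 1))) := by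
    have h := ((tendsto_neg_log_tailK_div_pow (k := k) hm).comp htop).add
      ((((tendsto_pow_atTop (Nat.succ_ne_zero k)).comp htop).inv_tendsto_atTop).const_mul (log C))
    simp only [mul_zero, add_zero] at h
    refine h.congr' ?_
    filter_upwards [Ioo_mem_nhdsGT one_pos] with s hs
    simp only [Function.comp_apply, Pi.inv_apply, Nat.succ_eq_add_one]
    rw [(htail s hs).2, log_mul hs.1.ne' hC.ne']
    ring
  simpa [inv_div] using hratio.inv₀ (by positivity)

theorem stmt13 (k : ℕ) (hk : 1 ≤ k) (m : ℝ) (hm : 0 < m)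
    (ts : ℝ → ℝ)
    (hts : ∀ s ∈ Set.Ioo (0:ℝ) 1, 0 ≤ ts s ∧ PsiK k m (ts s) = (1 - s) * CbetaK k m) :
    Tendsto (fun s : ℝ => (ts s) ^ (k + 1) / (-Real.log s))
      (𝓝[>] (0:ℝ)) (𝓝 (((k:ℝ) + 1) / m)) :=
  stmt13_general k m hm ts hts
end

section
/- Fix an integer k ≥ 1 and m > 0, and let Ψ(u) = ∫_0^u exp(−(m/(k+1)) t^{k+1}) dt and C_β = ∫_0^∞ exp(−(m/(k+1)) t^{k+1}) dt, with Ψ⁻¹ the inverse of Ψ restricted to [0, ∞). Define f(s) = Ψ'(Ψ⁻¹((1−s)C_β)) · Ψ⁻¹((1−s)C_β) for s ∈ (0,1), where Ψ'(t) = exp(−(m/(k+1)) t^{k+1}). Then f(s) / ( s (ln s)² ) → 0 as s → 0⁺, and f(s) → 0 as s → 0⁺. -/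
open MeasureTheory Filter Set
open scoped Topology

/-- The inverse `Ψ⁻¹` of the (strictly increasing) map `Ψ`. -/
noncomputable def PsiKInv (k : ℕ) (m : ℝ) : ℝ → ℝ :=
  Function.invFun (PsiK k m)

/-- `Ψ'(u) = exp(−(m/(k+1)) u^{k+1})`. -/
noncomputable def PsiK' (k : ℕ) (m : ℝ) (u : ℝ) : ℝ :=
  Real.exp (-(m / ((k:ℝ) + 1)) * u ^ (k + 1))

/-- `f(s) = Ψ'(Ψ⁻¹((1−s)C_β)) · Ψ⁻¹((1−s)C_β)`. -/
noncomputable def fK (k : ℕ) (m : ℝ) (s : ℝ) : ℝ :=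
  PsiK' k m (PsiKInv k m ((1 - s) * CbetaK k m)) * PsiKInv k m ((1 - s) * CbetaK k m)

/-!
Write `T(u) = ∫ᵤ^∞ Ψ'` and `v = Ψ⁻¹((1 - s) C_β)`, so that `T(v) = s C_β` and `v → ∞` as
`s → 0⁺`. Comparing `Ψ'` on `(u, ∞)` with the derivatives of `-Ψ'(t) / (m u^k)` and of
`-Ψ'(t) / ((m + k) t^k)` gives the Mills-ratio bounds
`Ψ'(u) / ((m + k) u^k) ≤ T(u) ≤ Ψ'(u) / (m u^k)` for `u ≥ 1`. The lower bound gives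
`f(s) = Ψ'(v) v ≤ (m + k) T(v) v^{k+1}` and the upper one `v^{k+1} ≲ -log T(v)`, hence
`f(s) ≤ K s (-log s + L)`. Both limits follow, because `s log s → 0` and `|log s| → ∞`.
-/

open Real

noncomputable def PsiKTail (k : ℕ) (m : ℝ) (u : ℝ) : ℝ :=
  ∫ t in Ioi u, PsiK' k m t

section ImproperIntegral

variable {f g G : ℝ → ℝ} {a l : ℝ}

theorem setIntegral_Ioi_le_of_hasDerivAt (hG : ∀ x ∈ Ici a, HasDerivAt G (g x) x)
    (hg : ∀ x ∈ Ioi a, 0 ≤ g x) (hGl : Tendsto G atTop (𝓝 l)) (hf : IntegrableOn f (Ioi a))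
    (hfg : ∀ x ∈ Ioi a, f x ≤ g x) :
    ∫ x in Ioi a, f x ≤ l - G a := by
  rw [← integral_Ioi_of_hasDerivAt_of_nonneg' hG hg hGl]
  exact setIntegral_mono_on hf (integrableOn_Ioi_deriv_of_nonneg' hG hg hGl) measurableSet_Ioi hfg

theorem le_setIntegral_Ioi_of_hasDerivAt (hG : ∀ x ∈ Ici a, HasDerivAt G (g x) x)
    (hg : ∀ x ∈ Ioi a, 0 ≤ g x) (hGl : Tendsto G atTop (𝓝 l)) (hf : IntegrableOn f (Ioi a))
    (hgf : ∀ x ∈ Ioi a, g x ≤ f x) :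
    l - G a ≤ ∫ x in Ioi a, f x := by
  rw [← integral_Ioi_of_hasDerivAt_of_nonneg' hG hg hGl]
  exact setIntegral_mono_on (integrableOn_Ioi_deriv_of_nonneg' hG hg hGl) hf measurableSet_Ioi hgf

end ImproperIntegral

section Density

variable (k : ℕ) {m : ℝ}

theorem psiK'_pos (t : ℝ) : 0 < PsiK' k m t := exp_pos _

theorem continuous_psiK' : Continuous (PsiK' k m) := by unfold PsiK'; fun_prop

theorem hasDerivAt_psiK' (t : ℝ) : HasDerivAt (PsiK' k m) (-(m * t ^ k * PsiK' k m t)) t := by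
  have hk : (k : ℝ) + 1 ≠ 0 := by positivity
  refine ((hasDerivAt_pow (k + 1) t).const_mul (-(m / ((k : ℝ) + 1)))).exp.congr_deriv ?_
  rw [PsiK', Nat.add_sub_cancel]
  push_cast
  field_simp

theorem tendsto_psiK'_atTop (hm : 0 < m) : Tendsto (PsiK' k m) atTop (𝓝 0) := by
  have hc : -(m / ((k : ℝ) + 1)) < 0 := neg_neg_of_pos (by positivity)
  exact tendsto_exp_atBot.comp
    ((tendsto_pow_atTop (Nat.succ_ne_zero k)).const_mul_atTop_of_neg hc)

theorem integrableOn_psiK'_Ioi (hm : 0 < m) (a : ℝ) : IntegrableOn (PsiK' k m) (Ioi a) := by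
  have hc : 0 < m / ((k : ℝ) + 1) := by positivity
  refine integrable_of_isBigO_exp_neg hc (continuous_psiK' k).continuousOn ?_
  refine Asymptotics.IsBigO.of_bound 1 ?_
  filter_upwards [eventually_ge_atTop 1] with t ht
  rw [one_mul, norm_of_nonneg (psiK'_pos k t).le, norm_of_nonneg (exp_pos _).le]
  have : t ≤ t ^ (k + 1) := le_self_pow₀ ht (Nat.succ_ne_zero k)
  exact exp_le_exp.2 (by nlinarith)

end Density

section Primitive

variable (k : ℕ) {m : ℝ}

theorem hasDerivAt_psiK (u : ℝ) : HasDerivAt (PsiK k m) (PsiK' k m u) u :=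
  ((continuous_psiK' k).integral_hasStrictDerivAt 0 u).hasDerivAt

theorem continuous_psiK : Continuous (PsiK k m) :=
  continuous_iff_continuousAt.2 fun u => (hasDerivAt_psiK k u).continuousAt

theorem strictMono_psiK : StrictMono (PsiK k m) :=
  strictMono_of_hasDerivAt_pos (hasDerivAt_psiK k) (psiK'_pos k)

theorem psiK_zero : PsiK k m 0 = 0 := intervalIntegral.integral_same

theorem tendsto_psiK_atTop (hm : 0 < m) : Tendsto (PsiK k m) atTop (𝓝 (CbetaK k m)) :=
  intervalIntegral_tendsto_integral_Ioi 0 (integrableOn_psiK'_Ioi k hm 0) tendsto_id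

theorem psiKTail_pos (hm : 0 < m) (u : ℝ) : 0 < PsiKTail k m u := by
  have : NeZero (volume.restrict (Ioi u)) := ⟨by simp⟩
  exact integral_exp_pos (integrableOn_psiK'_Ioi k hm u)

theorem cbetaK_pos (hm : 0 < m) : 0 < CbetaK k m := psiKTail_pos k hm 0

theorem psiK_add_psiKTail (hm : 0 < m) (u : ℝ) : PsiK k m u + PsiKTail k m u = CbetaK k m :=
  intervalIntegral.integral_interval_add_Ioi (integrableOn_psiK'_Ioi k hm 0)
    (integrableOn_psiK'_Ioi k hm u)

theorem psiK_psiKInv (hm : 0 < m) {y : ℝ} (hy0 : 0 ≤ y) (hy : y < CbetaK k m) :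
    PsiK k m (PsiKInv k m y) = y :=
  Function.invFun_eq <| mem_range_of_exists_le_of_exists_ge (continuous_psiK k)
    ⟨0, by rwa [psiK_zero]⟩ ((tendsto_psiK_atTop k hm).eventually (eventually_ge_nhds hy)).exists

theorem psiKTail_psiKInv (hm : 0 < m) {s : ℝ} (hs0 : 0 < s) (hs1 : s ≤ 1) :
    PsiKTail k m (PsiKInv k m ((1 - s) * CbetaK k m)) = s * CbetaK k m := by
  have hC := cbetaK_pos k hm
  have := psiK_add_psiKTail k hm (PsiKInv k m ((1 - s) * CbetaK k m))
  rw [psiK_psiKInv k hm (by nlinarith) (by nlinarith)] at this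
  linarith

theorem tendsto_psiKInv (hm : 0 < m) :
    Tendsto (fun s => PsiKInv k m ((1 - s) * CbetaK k m)) (𝓝[>] 0) atTop := by
  refine tendsto_atTop.2 fun M => ?_
  have hsmall : ∀ᶠ s in 𝓝[>] (0 : ℝ), s * CbetaK k m < PsiKTail k m M := by
    have : Tendsto (fun s : ℝ => s * CbetaK k m) (𝓝[>] 0) (𝓝 0) :=
      tendsto_nhdsWithin_of_tendsto_nhds ((continuous_mul_const _).tendsto' 0 0 (zero_mul _))
    exact this.eventually (eventually_lt_nhds (psiKTail_pos k hm M))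
  filter_upwards [hsmall, Ioo_mem_nhdsGT one_pos] with s hs hs01
  have hM := psiK_add_psiKTail k hm M
  have hv := psiK_add_psiKTail k hm (PsiKInv k m ((1 - s) * CbetaK k m))
  rw [psiKTail_psiKInv k hm hs01.1 hs01.2.le] at hv
  exact ((strictMono_psiK k).lt_iff_lt.1 (by linarith)).le

end Primitive

section TailBounds

variable (k : ℕ) {m : ℝ}

theorem psiKTail_le (hm : 0 < m) {u : ℝ} (hu : 0 < u) :
    PsiKTail k m u ≤ PsiK' k m u / (m * u ^ k) := by
  have key := setIntegral_Ioi_le_of_hasDerivAt (f := PsiK' k m)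
    (g := fun t => t ^ k * PsiK' k m t / u ^ k) (G := fun t => -PsiK' k m t / (m * u ^ k))
    (fun t _ => ((hasDerivAt_psiK' k t).neg.div_const _).congr_deriv (by field_simp))
    (fun t ht => by
      have := psiK'_pos k (m := m) t
      have : 0 < t := hu.trans ht
      positivity)
    (by simpa using (tendsto_psiK'_atTop k hm).neg.div_const (m * u ^ k))
    (integrableOn_psiK'_Ioi k hm u)
    (fun t ht => by
      rw [le_div_iff₀ (by positivity), mul_comm]
      exact mul_le_mul_of_nonneg_right (pow_le_pow_left₀ hu.le ht.le k) (psiK'_pos k t).le)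
  simpa [PsiKTail, neg_div] using key

theorem le_psiKTail (hm : 0 < m) {u : ℝ} (hu : 1 ≤ u) :
    PsiK' k m u / ((m + k) * u ^ k) ≤ PsiKTail k m u := by
  have hmk : 0 < m + k := by positivity
  have hG (t : ℝ) (ht : t ∈ Ici u) :
      HasDerivAt (fun t => -(PsiK' k m t * t ^ (-(k : ℤ))) / (m + k))
        (PsiK' k m t * (m + k / t ^ (k + 1)) / (m + k)) t := by
    have ht0 : t ≠ 0 := by linarith [ht.out]
    refine (((hasDerivAt_psiK' k t).mul (hasDerivAt_zpow _ t (.inl ht0))).neg.div_const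
      _).congr_deriv ?_
    simp only [zpow_sub₀ ht0, zpow_neg, zpow_natCast, zpow_one, Int.cast_neg, Int.cast_natCast]
    field_simp
    ring
  have hG_lim : Tendsto (fun t => -(PsiK' k m t * t ^ (-(k : ℤ))) / (m + k)) atTop (𝓝 0) := by
    have : Tendsto (fun t => PsiK' k m t * t ^ (-(k : ℤ))) atTop (𝓝 0) := by
      refine squeeze_zero' ?_ ?_ (tendsto_psiK'_atTop k hm)
      · filter_upwards [eventually_gt_atTop 0] with t ht
        have := psiK'_pos k (m := m) t
        positivity
      · filter_upwards [eventually_ge_atTop 1] with t ht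
        exact mul_le_of_le_one_right (psiK'_pos k t).le (zpow_le_one_of_nonpos₀ ht (by simp))
    simpa using this.neg.div_const (m + k)
  have key := le_setIntegral_Ioi_of_hasDerivAt (f := PsiK' k m) hG
    (fun t ht => by
      have := psiK'_pos k (m := m) t
      have : 0 < t := by linarith [ht.out]
      positivity)
    hG_lim (integrableOn_psiK'_Ioi k hm u)
    (fun t ht => by
      have ht1 : 1 ≤ t ^ (k + 1) := one_le_pow₀ (hu.trans ht.out.le)
      rw [div_le_iff₀ hmk]
      refine mul_le_mul_of_nonneg_left ?_ (psiK'_pos k t).le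
      gcongr
      exact div_le_self (Nat.cast_nonneg k) ht1)
  simp only [zpow_neg, zpow_natCast, zero_sub, neg_div, neg_neg] at key
  rwa [PsiKTail, div_mul_eq_div_div_swap, div_eq_mul_inv (PsiK' k m u)]

theorem psiK'_mul_le_psiKTail_mul_neg_log (hm : 0 < m) {u : ℝ} (hu : 1 ≤ u) :
    PsiK' k m u * u ≤
      (m + k) * (k + 1) / m * PsiKTail k m u * (-log (PsiKTail k m u) - log m) := by
  have hu0 : 0 < u := by linarith
  have hT : 0 < PsiKTail k m u := psiKTail_pos k hm u
  have hφ : 0 < PsiK' k m u := psiK'_pos k u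
  have hlow : PsiK' k m u ≤ (m + k) * PsiKTail k m u * u ^ k := by
    have := le_psiKTail k hm hu
    rwa [div_le_iff₀ (by positivity), ← mul_assoc, mul_comm _ (m + k)] at this
  have hup : PsiKTail k m u ≤ PsiK' k m u / m :=
    (psiKTail_le k hm hu0).trans <| div_le_div_of_nonneg_left hφ.le hm <|
      le_mul_of_one_le_right hm.le (one_le_pow₀ hu)
  have hpow : u ^ (k + 1) ≤ (k + 1) / m * (-log (PsiKTail k m u) - log m) := by
    have hlog := log_le_log hT hup
    rw [log_div hφ.ne' hm.ne', PsiK', log_exp] at hlog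
    have hk : (0 : ℝ) < k + 1 := by positivity
    rw [div_mul_eq_mul_div, le_div_iff₀ hm]
    field_simp at hlog
    linarith
  calc PsiK' k m u * u ≤ (m + k) * PsiKTail k m u * u ^ k * u := by gcongr
    _ = (m + k) * PsiKTail k m u * u ^ (k + 1) := by ring
    _ ≤ (m + k) * PsiKTail k m u * ((k + 1) / m * (-log (PsiKTail k m u) - log m)) := by gcongr
    _ = _ := by ring

end TailBounds

theorem exists_fK_le_mul_neg_log {k : ℕ} {m : ℝ} (hm : 0 < m) :
    ∃ K L : ℝ, ∀ᶠ s in 𝓝[>] 0, 0 ≤ fK k m s ∧ fK k m s ≤ K * s * (-log s + L) := by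
  have hC := cbetaK_pos k hm
  refine ⟨(m + k) * (k + 1) / m * CbetaK k m, -log (CbetaK k m) - log m, ?_⟩
  filter_upwards [(tendsto_psiKInv k hm).eventually_ge_atTop 1, Ioo_mem_nhdsGT one_pos]
    with s hv hs
  refine ⟨mul_nonneg (psiK'_pos k _).le (by linarith), ?_⟩
  calc fK k m s ≤ _ := psiK'_mul_le_psiKTail_mul_neg_log k hm hv
    _ = _ := by rw [psiKTail_psiKInv k hm hs.1 hs.2.le, log_mul hs.1.ne' hC.ne']; ring

theorem tendsto_neg_add_div_sq_atBot (L : ℝ) :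
    Tendsto (fun x : ℝ => (-x + L) / x ^ 2) atBot (𝓝 0) := by
  have h := (tendsto_inv_atBot_zero (𝕜 := ℝ)).neg.add
    ((tendsto_inv_atBot_zero (𝕜 := ℝ)).pow 2 |>.const_mul L)
  simp only [neg_zero, ne_eq, OfNat.ofNat_ne_zero, not_false_eq_true, zero_pow, mul_zero,
    add_zero] at h
  refine h.congr' ?_
  filter_upwards [eventually_lt_atBot 0] with x hx
  field_simp

section Logarithm

variable {g : ℝ → ℝ} {K L : ℝ}

theorem tendsto_div_mul_log_sq_of_le_mul_neg_log
    (hg : ∀ᶠ s in 𝓝[>] 0, 0 ≤ g s ∧ g s ≤ K * s * (-log s + L)) :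
    Tendsto (fun s => g s / (s * log s ^ 2)) (𝓝[>] 0) (𝓝 0) := by
  have hlim := ((tendsto_neg_add_div_sq_atBot L).comp tendsto_log_nhdsGT_zero).const_mul K
  rw [mul_zero] at hlim
  have hbound : ∀ᶠ s in 𝓝[>] 0, 0 ≤ g s / (s * log s ^ 2) ∧
      g s / (s * log s ^ 2) ≤ K * ((fun x => (-x + L) / x ^ 2) ∘ log) s := by
    filter_upwards [hg, Ioo_mem_nhdsGT one_pos] with s hs hs01
    have hs0 := hs01.1
    have hlog : log s ≠ 0 := (log_neg hs0 hs01.2).ne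
    have hden : 0 < s * log s ^ 2 := by positivity
    refine ⟨div_nonneg hs.1 hden.le, ?_⟩
    rw [div_le_iff₀ hden]
    calc g s ≤ K * s * (-log s + L) := hs.2
      _ = K * ((-log s + L) / log s ^ 2) * (s * log s ^ 2) := by field_simp
  exact squeeze_zero' (hbound.mono fun _ h => h.1) (hbound.mono fun _ h => h.2) hlim

theorem tendsto_nhdsGT_zero_of_le_mul_neg_log
    (hg : ∀ᶠ s in 𝓝[>] 0, 0 ≤ g s ∧ g s ≤ K * s * (-log s + L)) :
    Tendsto g (𝓝[>] 0) (𝓝 0) := by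
  have hlim : Tendsto (fun s => K * s * (-log s + L)) (𝓝[>] 0) (𝓝 0) := by
    have hc : Continuous fun s : ℝ => K * (-(s * log s) + L * s) :=
      (continuous_mul_log.neg.add (continuous_const_mul L)).const_mul K
    have := hc.tendsto 0
    simp only [zero_mul, neg_zero, mul_zero, add_zero] at this
    exact (tendsto_nhdsWithin_of_tendsto_nhds this).congr fun s => by ring
  exact squeeze_zero' (hg.mono fun _ h => h.1) (hg.mono fun _ h => h.2) hlim

end Logarithm

theorem stmt15_general (k : ℕ) (m : ℝ) (hm : 0 < m) :
    Tendsto (fun s : ℝ => fK k m s / (s * (Real.log s) ^ 2)) (𝓝[>] (0:ℝ)) (𝓝 0) ∧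
    Tendsto (fK k m) (𝓝[>] (0:ℝ)) (𝓝 0) := by
  obtain ⟨K, L, hf⟩ := exists_fK_le_mul_neg_log hm
  exact ⟨tendsto_div_mul_log_sq_of_le_mul_neg_log hf, tendsto_nhdsGT_zero_of_le_mul_neg_log hf⟩

theorem stmt15 (k : ℕ) (hk : 1 ≤ k) (m : ℝ) (hm : 0 < m) :
    Tendsto (fun s : ℝ => fK k m s / (s * (Real.log s) ^ 2)) (𝓝[>] (0:ℝ)) (𝓝 0) ∧
    Tendsto (fK k m) (𝓝[>] (0:ℝ)) (𝓝 0) :=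
  stmt15_general k m hm
end

section
/- Fix an integer k ≥ 1 and m > 0, and let ψ(w) = ∫_0^w exp((m/(k+1)) t^{k+1}) dt for w ≥ 0, with inverse ψ⁻¹ : [0, ∞) → [0, ∞) and ψ'(w) = exp((m/(k+1)) w^{k+1}). Then for every s > 0 there exists a constant C_s > 0 such that for all v > 0: ψ'(ψ⁻¹(v)) · ψ⁻¹(v) ≤ C_s (1 + v^s) · v and ψ'(ψ⁻¹(v)) − 1 ≤ C_s (1 + v^s) · v. -/
open MeasureTheory Filter Set
open scoped Topology

/-- `ψ(w) = ∫₀ʷ exp((m/(k+1)) t^{k+1}) dt`, the change of variables in the model case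
`β(s) = s^k`. -/
noncomputable def psiK (k : ℕ) (m : ℝ) (w : ℝ) : ℝ :=
  ∫ t in (0:ℝ)..w, Real.exp ((m / ((k:ℝ) + 1)) * t ^ (k + 1))

/-- The inverse `ψ⁻¹` of the (strictly increasing) map `ψ`. -/
noncomputable def psiKInv (k : ℕ) (m : ℝ) : ℝ → ℝ :=
  Function.invFun (psiK k m)

/-- `ψ'(w) = exp((m/(k+1)) w^{k+1})`. -/
noncomputable def psiK' (k : ℕ) (m : ℝ) (w : ℝ) : ℝ :=
  Real.exp ((m / ((k:ℝ) + 1)) * w ^ (k + 1))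

lemma pow_succ_sub_le_aux {a b : ℝ} (ha : 0 ≤ a) (hab : a ≤ b) (n : ℕ) :
    b ^ (n+1) - a ^ (n+1) ≤ (n+1) * (b - a) * b ^ n := by
  induction n with
  | zero => simp
  | succ n ih =>
    have hb : 0 ≤ b := ha.trans hab
    have han : a ^ (n+1) ≤ b ^ (n+1) := pow_le_pow_left₀ ha hab _
    have hbn : 0 ≤ b ^ n := pow_nonneg hb n
    have h2 : b * (b ^ (n+1) - a ^ (n+1)) ≤ b * ((n+1) * (b - a) * b ^ n) :=
      mul_le_mul_of_nonneg_left ih hb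
    have h3 : (b - a) * a ^ (n+1) ≤ (b - a) * b ^ (n+1) :=
      mul_le_mul_of_nonneg_left han (by linarith)
    push_cast
    calc b ^ (n+1+1) - a ^ (n+1+1)
        = b * (b ^ (n+1) - a ^ (n+1)) + (b - a) * a ^ (n+1) := by ring
      _ ≤ b * (((n:ℝ)+1) * (b - a) * b ^ n) + (b - a) * b ^ (n+1) := add_le_add h2 h3
      _ = ((n:ℝ)+1+1) * (b - a) * b ^ (n+1) := by ring

lemma one_add_pow_le_aux {x : ℝ} (hx : 0 ≤ x) (n : ℕ) :
    (1 + x) ^ n ≤ 2 ^ n * (1 + x ^ n) := by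
  rcases le_total x 1 with h | h
  · have h1 : (1 + x) ^ n ≤ 2 ^ n := pow_le_pow_left₀ (by linarith) (by linarith) n
    have h2 : (0:ℝ) ≤ x ^ n := pow_nonneg hx n
    nlinarith [pow_pos (show (0:ℝ) < 2 by norm_num) n]
  · have h1 : (1 + x) ^ n ≤ (2 * x) ^ n := pow_le_pow_left₀ (by linarith) (by linarith) n
    have h2 : (2*x) ^ n = 2 ^ n * x ^ n := mul_pow 2 x n
    nlinarith [pow_pos (show (0:ℝ) < 2 by norm_num) n]

lemma exp_sub_one_le_aux {x : ℝ} : Real.exp x - 1 ≤ x * Real.exp x := by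
  have h := Real.add_one_le_exp (-x)
  have h2 : Real.exp (-x) * Real.exp x = 1 := by
    rw [← Real.exp_add]; simp
  nlinarith [Real.exp_pos x]

lemma psiK_lower (k : ℕ) (m : ℝ) (hm : 0 < m) {a w : ℝ} (ha : 0 ≤ a) (haw : a ≤ w) :
    (w - a) * Real.exp ((m / ((k:ℝ) + 1)) * a ^ (k + 1)) ≤ psiK k m w := by
  set c := m / ((k:ℝ) + 1) with hcdef
  have hc : 0 < c := div_pos hm (by positivity)
  have hf : Continuous fun t : ℝ => Real.exp (c * t ^ (k + 1)) := by continuity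
  have hint : ∀ x y : ℝ, IntervalIntegrable (fun t => Real.exp (c * t ^ (k + 1))) volume x y :=
    fun x y => hf.intervalIntegrable x y
  have h1 : psiK k m w = (∫ t in (0:ℝ)..a, Real.exp (c * t ^ (k + 1)))
      + ∫ t in a..w, Real.exp (c * t ^ (k + 1)) := by
    rw [psiK, ← intervalIntegral.integral_add_adjacent_intervals (hint 0 a) (hint a w)]
  have h2 : (0:ℝ) ≤ ∫ t in (0:ℝ)..a, Real.exp (c * t ^ (k + 1)) :=
    intervalIntegral.integral_nonneg ha (fun x _ => (Real.exp_pos _).le)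
  have h3 : (w - a) * Real.exp (c * a ^ (k + 1)) ≤ ∫ t in a..w, Real.exp (c * t ^ (k + 1)) := by
    have hmono := intervalIntegral.integral_mono_on (μ := volume) haw
      (intervalIntegrable_const (c := Real.exp (c * a ^ (k + 1)))) (hint a w)
      (fun x hx => Real.exp_le_exp.2
        (mul_le_mul_of_nonneg_left (pow_le_pow_left₀ ha hx.1 _) hc.le))
    simpa [smul_eq_mul] using hmono
  linarith

lemma psiK_inv_spec (k : ℕ) (m : ℝ) (hm : 0 < m) {v : ℝ} (hv : 0 < v) :
    psiK k m (psiKInv k m v) = v ∧ 0 < psiKInv k m v := by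
  have hf : Continuous fun t : ℝ => Real.exp ((m / ((k:ℝ) + 1)) * t ^ (k + 1)) := by continuity
  have hint : ∀ x y : ℝ,
      IntervalIntegrable (fun t => Real.exp ((m / ((k:ℝ) + 1)) * t ^ (k + 1))) volume x y :=
    fun x y => hf.intervalIntegrable x y
  have hcont : Continuous (psiK k m) := intervalIntegral.continuous_primitive hint 0
  have h0 : psiK k m 0 = 0 := intervalIntegral.integral_same
  have hvv : v ≤ psiK k m v := by
    have := psiK_lower k m hm (le_refl 0) hv.le
    simpa using this
  have hex : ∃ a, psiK k m a = v := by
    have hsub := intermediate_value_Icc (le_of_lt hv) hcont.continuousOn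
    have hmem : v ∈ Icc (psiK k m 0) (psiK k m v) := ⟨by rw [h0]; exact hv.le, hvv⟩
    obtain ⟨a, _, ha⟩ := hsub hmem
    exact ⟨a, ha⟩
  have heq : psiK k m (psiKInv k m v) = v := Function.invFun_eq hex
  refine ⟨heq, ?_⟩
  by_contra h
  push_neg at h
  have hle : psiK k m (psiKInv k m v) ≤ 0 := by
    rw [psiK, intervalIntegral.integral_symm]
    have : (0:ℝ) ≤ ∫ t in (psiKInv k m v)..(0:ℝ),
        Real.exp ((m / ((k:ℝ) + 1)) * t ^ (k + 1)) :=
      intervalIntegral.integral_nonneg h (fun x _ => (Real.exp_pos _).le)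
    linarith
  rw [heq] at hle
  linarith

set_option maxHeartbeats 1600000 in
theorem stmt18 (k : ℕ) (hk : 1 ≤ k) (m : ℝ) (hm : 0 < m) :
    ∀ s : ℝ, 0 < s → ∃ C > (0:ℝ), ∀ v : ℝ, 0 < v →
      psiK' k m (psiKInv k m v) * psiKInv k m v ≤ C * (1 + v ^ s) * v ∧
      psiK' k m (psiKInv k m v) - 1 ≤ C * (1 + v ^ s) * v := by
  intro s hs
  set c := m / ((k:ℝ) + 1) with hcdef
  have hc : 0 < c := div_pos hm (by positivity)
  set A := Real.exp (c * ((k:ℝ)+1)) * 2 ^ (k+1) * (1 + 1/(c*s)) with hAdef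
  set B := (c+1) * Real.exp c with hBdef
  have hA0 : 0 < A := by positivity
  have hB0 : 0 < B := by positivity
  clear_value A B
  refine ⟨A + B, by positivity, ?_⟩
  intro v hv
  obtain ⟨hw, hw0⟩ := psiK_inv_spec k m hm hv
  set w := psiKInv k m v with hwdef
  have hvs : 0 < v ^ s := Real.rpow_pos_of_pos hv s
  have hwv : w ≤ v := by
    have h := psiK_lower k m hm (le_refl 0) hw0.le
    rw [hw] at h
    simpa using h
  have hpsi' : psiK' k m w = Real.exp (c * w ^ (k+1)) := rfl
  have hEpos : (0:ℝ) < Real.exp (c * w ^ (k+1)) := Real.exp_pos _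
  rw [hpsi']
  clear_value w
  rcases le_total w 1 with hw1 | hw1
  · -- small w
    have hwp : w ^ (k+1) ≤ w := by
      have h := pow_le_pow_of_le_one hw0.le hw1 (show 1 ≤ k+1 by omega)
      simpa using h
    have hwpn : 0 ≤ w ^ (k+1) := pow_nonneg hw0.le _
    have hcw : c * w ^ (k+1) ≤ c := by nlinarith
    have hexp1 : Real.exp (c * w ^ (k+1)) ≤ Real.exp c := Real.exp_le_exp.2 hcw
    have hBle : Real.exp c ≤ B := by nlinarith [Real.exp_pos c]
    have hb1 : Real.exp c * v ≤ B * v := mul_le_mul_of_nonneg_right hBle hv.le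
    have hp1 : 0 < A * v := mul_pos hA0 hv
    have hp2 : 0 < A * v ^ s * v := mul_pos (mul_pos hA0 hvs) hv
    have hp3 : 0 < B * v ^ s * v := mul_pos (mul_pos hB0 hvs) hv
    constructor
    · have h1 : Real.exp (c * w ^ (k+1)) * w ≤ Real.exp c * v :=
        mul_le_mul hexp1 hwv hw0.le (Real.exp_pos c).le
      linarith
    · have h2 : Real.exp (c * w ^ (k+1)) - 1 ≤ (c * w ^ (k+1)) * Real.exp (c * w ^ (k+1)) :=
        exp_sub_one_le_aux
      have h3 : (c * w ^ (k+1)) * Real.exp (c * w ^ (k+1)) ≤ (c * w) * Real.exp c := by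
        have : c * w ^ (k+1) ≤ c * w := by nlinarith
        exact mul_le_mul this hexp1 hEpos.le (by positivity)
      have h4 : (c * w) * Real.exp c ≤ (c * v) * Real.exp c := by
        have : c * w ≤ c * v := by nlinarith
        exact mul_le_mul_of_nonneg_right this (Real.exp_pos c).le
      have hcB : c * Real.exp c ≤ B := by nlinarith [Real.exp_pos c]
      have hb2 : (c * Real.exp c) * v ≤ B * v := mul_le_mul_of_nonneg_right hcB hv.le
      linarith
  · -- large w
    have hv1 : (1:ℝ) ≤ v := hw1.trans hwv
    have hwk : (1:ℝ) ≤ w ^ k := one_le_pow₀ hw1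
    have hwk0 : (0:ℝ) < w ^ k := by linarith
    set δ := 1 / w ^ k with hδdef
    have hδ0 : 0 < δ := by positivity
    have hδ1 : δ ≤ 1 := by rw [hδdef]; exact div_le_one_of_le₀ hwk hwk0.le
    set a := w - δ with hadef
    have ha0 : 0 ≤ a := by rw [hadef]; linarith
    have haw : a ≤ w := by rw [hadef]; linarith
    have hδu : δ * w ^ k = 1 := by rw [hδdef]; field_simp
    -- lower bound with a
    have hlow := psiK_lower k m hm ha0 haw
    rw [hw, ← hcdef] at hlow
    have hwa : w - a = δ := by rw [hadef]; ring
    rw [hwa] at hlow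
    -- exp(c a^{k+1}) ≤ v * w^k
    have h4 : Real.exp (c * a ^ (k+1)) ≤ v * w ^ k := by
      have h := mul_le_mul_of_nonneg_left hlow hwk0.le
      have heq : w ^ k * (δ * Real.exp (c * a ^ (k+1))) = Real.exp (c * a ^ (k+1)) := by
        rw [← mul_assoc, mul_comm (w ^ k) δ, hδu, one_mul]
      rw [heq] at h
      linarith [h]
    -- w^{k+1} - a^{k+1} ≤ k+1
    have hkey : w ^ (k+1) - a ^ (k+1) ≤ (k:ℝ)+1 := by
      have h := pow_succ_sub_le_aux ha0 haw k
      rw [hwa] at h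
      have heq : ((k:ℝ)+1) * δ * w ^ k = (k:ℝ)+1 := by rw [mul_assoc, hδu, mul_one]
      push_cast at h
      linarith [h, heq.ge, heq.le]
    -- exp bound
    have h5 : c * w ^ (k+1) ≤ c * a ^ (k+1) + c * ((k:ℝ)+1) := by
      have hm1 : c * (w ^ (k+1) - a ^ (k+1)) ≤ c * ((k:ℝ)+1) :=
        mul_le_mul_of_nonneg_left hkey hc.le
      have hm2 : c * (w ^ (k+1) - a ^ (k+1)) = c * w ^ (k+1) - c * a ^ (k+1) :=
        mul_sub c _ _
      linarith
    have h6 : Real.exp (c * w ^ (k+1)) ≤ (v * w ^ k) * Real.exp (c * ((k:ℝ)+1)) := by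
      calc Real.exp (c * w ^ (k+1)) ≤ Real.exp (c * a ^ (k+1) + c * ((k:ℝ)+1)) :=
            Real.exp_le_exp.2 h5
        _ = Real.exp (c * a ^ (k+1)) * Real.exp (c * ((k:ℝ)+1)) := Real.exp_add _ _
        _ ≤ (v * w ^ k) * Real.exp (c * ((k:ℝ)+1)) :=
            mul_le_mul_of_nonneg_right h4 (Real.exp_pos _).le
    -- log bound
    have hlog : c * (w-1) ^ (k+1) ≤ Real.log v := by
      have hlow1 := psiK_lower k m hm (show (0:ℝ) ≤ w - 1 by linarith)
        (show w - 1 ≤ w by linarith)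
      rw [hw, ← hcdef] at hlow1
      have heq : w - (w - 1) = (1:ℝ) := by ring
      rw [heq, one_mul] at hlow1
      exact (Real.le_log_iff_exp_le hv).2 hlow1
    have hlogv : Real.log v ≤ v ^ s / s := by
      have h7 : Real.log (v ^ s) ≤ v ^ s - 1 := Real.log_le_sub_one_of_pos hvs
      rw [Real.log_rpow hv] at h7
      rw [le_div_iff₀ hs]
      linarith
    have hw1p : (w-1) ^ (k+1) ≤ v ^ s / (c*s) := by
      rw [le_div_iff₀ (by positivity)]
      have e : s * (v ^ s / s) = v ^ s := by field_simp
      have t1 : s * (c * (w-1) ^ (k+1)) ≤ s * Real.log v :=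
        mul_le_mul_of_nonneg_left hlog hs.le
      have t2 : s * Real.log v ≤ s * (v ^ s / s) :=
        mul_le_mul_of_nonneg_left hlogv hs.le
      linarith [t1, t2, e]
    have hwk1 : w ^ (k+1) ≤ 2 ^ (k+1) * (1 + v ^ s / (c*s)) := by
      have h8 := one_add_pow_le_aux (show (0:ℝ) ≤ w - 1 by linarith) (k+1)
      have heq : (1:ℝ) + (w - 1) = w := by ring
      rw [heq] at h8
      have h2p : (0:ℝ) < 2 ^ (k+1) := by positivity
      have t3 : 2 ^ (k+1) * (w-1) ^ (k+1) ≤ 2 ^ (k+1) * (v ^ s / (c*s)) :=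
        mul_le_mul_of_nonneg_left hw1p h2p.le
      linarith [h8, t3]
    -- combine
    have hmain : Real.exp (c * w ^ (k+1)) * w ≤ A * (1 + v ^ s) * v := by
      have s1 : Real.exp (c * w ^ (k+1)) * w ≤ Real.exp (c * ((k:ℝ)+1)) * v * w ^ (k+1) := by
        have := mul_le_mul_of_nonneg_right h6 hw0.le
        calc Real.exp (c * w ^ (k+1)) * w ≤ (v * w ^ k) * Real.exp (c * ((k:ℝ)+1)) * w := this
          _ = Real.exp (c * ((k:ℝ)+1)) * v * w ^ (k+1) := by ring
      have s2 : Real.exp (c * ((k:ℝ)+1)) * v * w ^ (k+1)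
          ≤ Real.exp (c * ((k:ℝ)+1)) * v * (2 ^ (k+1) * (1 + v ^ s / (c*s))) :=
        mul_le_mul_of_nonneg_left hwk1 (by positivity)
      have keyin : 1 + v ^ s / (c*s) ≤ (1 + 1/(c*s)) * (1 + v ^ s) := by
        have e1 : v ^ s / (c*s) = (1/(c*s)) * v ^ s := by ring
        have hpos : (0:ℝ) < 1/(c*s) := by positivity
        linarith [mul_pos hpos hvs]
      have s3 : Real.exp (c * ((k:ℝ)+1)) * v * (2 ^ (k+1) * (1 + v ^ s / (c*s)))
          ≤ A * (1 + v ^ s) * v := by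
        rw [hAdef]
        have h2p : (0:ℝ) < 2 ^ (k+1) := by positivity
        have t4 := mul_le_mul_of_nonneg_left keyin
          (show (0:ℝ) ≤ Real.exp (c * ((k:ℝ)+1)) * v * 2 ^ (k+1) by positivity)
        linarith [t4]
      linarith
    have hfin : A * (1 + v ^ s) * v ≤ (A + B) * (1 + v ^ s) * v := by
      have : (0:ℝ) ≤ B * (1 + v ^ s) * v := by positivity
      linarith [this]
    constructor
    · linarith
    · have : Real.exp (c * w ^ (k+1)) - 1 ≤ Real.exp (c * w ^ (k+1)) * w := by
        linarith [mul_le_mul_of_nonneg_left hw1 hEpos.le]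
      linarith
end
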